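/- Let t ≥ 1 and let V_1,…,V_t be nonempty sets, with V = V_1 × ⋯ × V_t. Let M ⊆ V with |M| = m and m ≤ t. Then there exist pairwise disjoint sets H_1,…,H_m ⊆ V, each of the form H_j = {v ∈ V : v_i = a^j_i for all i ∈ S_j} for some index set S_j ⊆ [t] with |S_j| ≤ m − 1 and fixed elements a^j_i ∈ V_i (i ∈ S_j), such that every element of M lies in exactly one of H_1,…,H_m and each H_j contains exactly one element of M. -/

import Mathlib

open Finset

variable {V : Type*}

/-- The number of neighbours of `v` in `G`. -/
noncomputable def degAt (G : SimpleGraph V) (v : V) : ℕ := {w | G.Adj v w}.ncard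

/-- `G` is `d`-regular. -/
def IsRegOfDeg (G : SimpleGraph V) (d : ℕ) : Prop := ∀ v, degAt G v = d

/-- The order (number of vertices) of the connected component of `v` in `H`. -/
noncomputable def compCard (H : SimpleGraph V) (v : V) : ℕ := {w | H.Reachable v w}.ncard

/-- The order of the largest connected component of `H`. -/
noncomputable def maxCompCard [Fintype V] (H : SimpleGraph V) : ℕ :=
  Finset.univ.sup (compCard H)

/-- The edge set of `G` as a `Finset`. -/
noncomputable def edgeFins (G : SimpleGraph V) [Fintype V] : Finset (Sym2 V) :=
  G.edgeSet.toFinite.toFinset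

open Classical in
/-- The probability of the event `A` under bond percolation on `G` with retention
probability `p`: each edge of `G` is retained independently with probability `p`. -/
noncomputable def percProb [Fintype V] (G : SimpleGraph V) (p : ℝ)
    (A : SimpleGraph V → Prop) : ℝ :=
  ∑ F ∈ (edgeFins G).powerset,
    if A (SimpleGraph.fromEdgeSet (↑F)) then
      p ^ F.card * (1 - p) ^ ((edgeFins G).card - F.card) else 0

open Classical in
/-- Percolation expectation of an ℝ-valued observable. -/
noncomputable def percExp [Fintype V] (G : SimpleGraph V) (p : ℝ)
    (X : SimpleGraph V → ℝ) : ℝ :=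
  ∑ F ∈ (edgeFins G).powerset,
    p ^ F.card * (1 - p) ^ ((edgeFins G).card - F.card) *
      X (SimpleGraph.fromEdgeSet (↑F))

open Classical in
/-- The probability of the event `A` under three independent bond percolations on `G`
with retention probabilities `p₁, p₂, p₃`. -/
noncomputable def percProb3 [Fintype V] (G : SimpleGraph V) (p₁ p₂ p₃ : ℝ)
    (A : SimpleGraph V → SimpleGraph V → SimpleGraph V → Prop) : ℝ :=
  ∑ F₁ ∈ (edgeFins G).powerset, ∑ F₂ ∈ (edgeFins G).powerset, ∑ F₃ ∈ (edgeFins G).powerset,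
    if A (SimpleGraph.fromEdgeSet (↑F₁)) (SimpleGraph.fromEdgeSet (↑F₂))
        (SimpleGraph.fromEdgeSet (↑F₃)) then
      (p₁ ^ F₁.card * (1 - p₁) ^ ((edgeFins G).card - F₁.card)) *
      (p₂ ^ F₂.card * (1 - p₂) ^ ((edgeFins G).card - F₂.card)) *
      (p₃ ^ F₃.card * (1 - p₃) ^ ((edgeFins G).card - F₃.card))
    else 0

/-- The Cartesian product of the graphs `Gs i`, `i : Fin t`. -/
def prodGraph {t : ℕ} {V : Fin t → Type*} (Gs : ∀ i, SimpleGraph (V i)) :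
    SimpleGraph (∀ i, V i) where
  Adj u v := ∃ i, (Gs i).Adj (u i) (v i) ∧ ∀ j, j ≠ i → u j = v j
  symm := by
    constructor
    rintro u v ⟨i, hadj, h⟩
    exact ⟨i, hadj.symm, fun j hj => (h j hj).symm⟩
  loopless := by
    constructor
    rintro u ⟨i, hadj, -⟩
    exact hadj.ne rfl

/-! Enumerate `M` as `w 0, …, w (m-1)`. For each pair `j ≠ k` pick a coordinate
`s {j, k}` in which `w j` and `w k` differ, chosen symmetrically in `j` and `k`, and let
`H j` fix the `m - 1` coordinates `s {j, k}`, `k ≠ j`, to their values at `w j`. Then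
`H j` and `H k` prescribe the different values of `w j` and `w k` in coordinate `s {j, k}`,
so they are disjoint, and `H j` contains `w j`. -/

variable {ι κ : Type*} {α : ι → Type*}

def projection (S : Finset ι) (a : ∀ i, α i) : Set (∀ i, α i) := {v | ∀ i ∈ S, v i = a i}

lemma mem_projection_self (S : Finset ι) (a : ∀ i, α i) : a ∈ projection S a :=
  fun _ _ => rfl

section Separation

variable [Nonempty ι]

/-- Choosing by `Classical.epsilon` from a predicate symmetric in `x` and `y` makes the
choice itself symmetric. -/
noncomputable def sepCoord (x y : ∀ i, α i) : ι := Classical.epsilon fun i => x i ≠ y i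

lemma sepCoord_comm (x y : ∀ i, α i) : sepCoord x y = sepCoord y x := by
  simp only [sepCoord, ne_comm]

lemma apply_sepCoord_ne {x y : ∀ i, α i} (h : x ≠ y) : x (sepCoord x y) ≠ y (sepCoord x y) :=
  Classical.epsilon_spec (Function.ne_iff.1 h)

variable [DecidableEq ι] [Fintype κ] [DecidableEq κ] (w : κ → ∀ i, α i)

noncomputable def separatingCoords (j : κ) : Finset ι :=
  (univ.erase j).image fun k => sepCoord (w j) (w k)

noncomputable def separatingProjection (j : κ) : Set (∀ i, α i) :=
  projection (separatingCoords w j) (w j)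

lemma card_separatingCoords_le (j : κ) : #(separatingCoords w j) ≤ Fintype.card κ - 1 :=
  card_image_le.trans (card_erase_of_mem (mem_univ j)).le

lemma sepCoord_mem_separatingCoords {j k : κ} (h : j ≠ k) :
    sepCoord (w j) (w k) ∈ separatingCoords w j :=
  mem_image_of_mem _ (mem_erase.2 ⟨h.symm, mem_univ k⟩)

lemma disjoint_separatingProjection {w : κ → ∀ i, α i} (hw : Function.Injective w) {j k : κ}
    (h : j ≠ k) : Disjoint (separatingProjection w j) (separatingProjection w k) := by
  rw [Set.disjoint_left]
  intro v hvj hvk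
  have hj := hvj _ (sepCoord_mem_separatingCoords w h)
  have hk := hvk _ (sepCoord_mem_separatingCoords w h.symm)
  rw [sepCoord_comm] at hk
  exact apply_sepCoord_ne (hw.ne h) (hj ▸ hk)

lemma apply_mem_separatingProjection_iff {w : κ → ∀ i, α i} (hw : Function.Injective w)
    {j k : κ} : w k ∈ separatingProjection w j ↔ k = j := by
  refine ⟨fun hk => ?_, fun h => h ▸ mem_projection_self _ _⟩
  by_contra h
  exact Set.disjoint_left.1 (disjoint_separatingProjection hw h) (mem_projection_self _ _) hk

end Separation

theorem stmt_3_general (t : ℕ) (ht : 1 ≤ t) (V : Fin t → Type)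
    (M : Set (∀ i, V i)) (hMfin : M.Finite) (m : ℕ) (hm : M.ncard = m) :
    ∃ H : Fin m → Set (∀ i, V i),
      (∀ j k, j ≠ k → Disjoint (H j) (H k)) ∧
      (∀ j, ∃ (S : Finset (Fin t)) (a : ∀ i, V i),
        S.card ≤ m - 1 ∧ H j = {v | ∀ i ∈ S, v i = a i}) ∧
      (∀ v ∈ M, ∃! j, v ∈ H j) ∧
      (∀ j, ∃! v, v ∈ M ∧ v ∈ H j) := by
  have : Nonempty (Fin t) := ⟨⟨0, ht⟩⟩
  obtain ⟨n, w, hw, rfl⟩ := hMfin.fin_param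
  obtain rfl : n = m := by rwa [Set.ncard_range_of_injective hw, Nat.card_fin] at hm
  refine ⟨separatingProjection w, fun j k => disjoint_separatingProjection hw,
    fun j => ⟨_, _, ?_, rfl⟩, ?_, fun j => ⟨w j, ⟨⟨j, rfl⟩, mem_projection_self _ _⟩, ?_⟩⟩
  · simpa using card_separatingCoords_le w j
  · rintro _ ⟨k, rfl⟩
    exact ⟨k, mem_projection_self _ _, fun j hj =>
      ((apply_mem_separatingProjection_iff hw).1 hj).symm⟩
  · rintro _ ⟨⟨k, rfl⟩, hk⟩
    rw [(apply_mem_separatingProjection_iff hw).1 hk]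

/-- the projection lemma. Any set `M` of at most `t` points in a product
`V_1 × ⋯ × V_t` can be covered by `|M|` pairwise disjoint "projections" (sets obtained
by fixing at most `|M| - 1` coordinates), each containing exactly one point of `M`. -/
theorem stmt_3 (t : ℕ) (ht : 1 ≤ t) (V : Fin t → Type) (hne : ∀ i, Nonempty (V i))
    (M : Set (∀ i, V i)) (hMfin : M.Finite) (m : ℕ) (hm : M.ncard = m) (hmt : m ≤ t) :
    ∃ H : Fin m → Set (∀ i, V i),
      (∀ j k, j ≠ k → Disjoint (H j) (H k)) ∧
      (∀ j, ∃ (S : Finset (Fin t)) (a : ∀ i, V i),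
        S.card ≤ m - 1 ∧ H j = {v | ∀ i ∈ S, v i = a i}) ∧
      (∀ v ∈ M, ∃! j, v ∈ H j) ∧
      (∀ j, ∃! v, v ∈ M ∧ v ∈ H j) :=
  stmt_3_general t ht V M hMfin m hm
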